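/- arXiv:1602.08619 — 2 statements merged into one kernel-verified Lean document; each statement's English description precedes it below -/
import Mathlib

section
/- Assume: Assumption 3 holds; N(x) is defined for every x ∈ 𝕏 and there is M ∈ ℕ with N(x) ≤ M for all x ∈ 𝕏; for every x ∈ 𝕏 an optimal control sequence for the horizon-N(x) problem from x exists, with κ(x) taken to be the control u provided by Assumption 3 when x ∈ 𝕏_f; and there exist class-K∞ functions α₁ and α₂ such that l(x,u) ≥ α₁(|x|) for all x ∈ 𝕏 and u ∈ 𝕌, and α₁(|x|) ≤ V_f(x) ≤ α₂(|x|) for all x ∈ 𝕏_f. Then: V(x) ≥ α₁(|x|) for all x ∈ 𝕏; V(x) ≤ α₂(|x|) for all x ∈ 𝕏_f; and V(f(x,κ(x))) ≤ V(x) − α₁(|x|) for all x ∈ 𝕏. -/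
open Set Filter Topology

/-- The state/control spaces are Euclidean spaces. -/
abbrev Vec (n : ℕ) := EuclideanSpace ℝ (Fin n)

/-- A control `u` is feasible at a state `x` if `u ∈ U`, `f x u ∈ X` and `h x u ∈ Y`. -/
def Feas {n m p : ℕ} (f : Vec n → Vec m → Vec n) (h : Vec n → Vec m → Vec p)
    (X : Set (Vec n)) (U : Set (Vec m)) (Y : Set (Vec p))
    (x : Vec n) (u : Vec m) : Prop :=
  u ∈ U ∧ f x u ∈ X ∧ h x u ∈ Y

/-- The trajectory from `x` under the control sequence `u`: `x(0) = x`, `x(k+1) = f (x k) (u k)`. -/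
def traj {n m : ℕ} (f : Vec n → Vec m → Vec n) (x : Vec n) (u : ℕ → Vec m) : ℕ → Vec n
  | 0 => x
  | k + 1 => f (traj f x u k) (u k)

/-- A control sequence `u(0), …, u(N-1)` is feasible from `x` if each `u k` is feasible at `x(k)`. -/
def FeasSeq {n m p : ℕ} (f : Vec n → Vec m → Vec n) (h : Vec n → Vec m → Vec p)
    (X : Set (Vec n)) (U : Set (Vec m)) (Y : Set (Vec p))
    (x : Vec n) (N : ℕ) (u : ℕ → Vec m) : Prop :=
  ∀ k < N, Feas f h X U Y (traj f x u k) (u k)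

/-- The sets `X_N`: `X_0 = Xf`, and `X_{N+1} = {x ∈ X : ∃ u feasible at x, f x u ∈ X_N}`. -/
def XN {n m p : ℕ} (f : Vec n → Vec m → Vec n) (h : Vec n → Vec m → Vec p)
    (X : Set (Vec n)) (U : Set (Vec m)) (Y : Set (Vec p)) (Xf : Set (Vec n)) :
    ℕ → Set (Vec n)
  | 0 => Xf
  | N + 1 => {x | x ∈ X ∧ ∃ u, Feas f h X U Y x u ∧ f x u ∈ XN f h X U Y Xf N}

/-- `Xf` is controlled invariant. -/
def CtrlInv {n m p : ℕ} (f : Vec n → Vec m → Vec n) (h : Vec n → Vec m → Vec p)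
    (X : Set (Vec n)) (U : Set (Vec m)) (Y : Set (Vec p)) (Xf : Set (Vec n)) : Prop :=
  ∀ x ∈ Xf, ∃ u, Feas f h X U Y x u ∧ f x u ∈ Xf

/-- The set of horizons `N` for which some feasible control sequence of length `N`
from `x` has trajectory ending in `Xf`. -/
def HorizonSet {n m p : ℕ} (f : Vec n → Vec m → Vec n) (h : Vec n → Vec m → Vec p)
    (X : Set (Vec n)) (U : Set (Vec m)) (Y : Set (Vec p)) (Xf : Set (Vec n))
    (x : Vec n) : Set ℕ :=
  {N | ∃ u : ℕ → Vec m, FeasSeq f h X U Y x N u ∧ traj f x u N ∈ Xf}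

/-- `N(x)`: the least horizon for which a feasible control sequence from `x` ends in `Xf`. -/
noncomputable def Nmin {n m p : ℕ} (f : Vec n → Vec m → Vec n) (h : Vec n → Vec m → Vec p)
    (X : Set (Vec n)) (U : Set (Vec m)) (Y : Set (Vec p)) (Xf : Set (Vec n))
    (x : Vec n) : ℕ :=
  sInf (HorizonSet f h X U Y Xf x)

/-- The horizon-`N` cost of the control sequence `u` from `x`. -/
noncomputable def cost {n m : ℕ} (f : Vec n → Vec m → Vec n)
    (l : Vec n → Vec m → ℝ) (Vf : Vec n → ℝ) (x : Vec n) (N : ℕ) (u : ℕ → Vec m) : ℝ :=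
  (∑ k ∈ Finset.range N, l (traj f x u k) (u k)) + Vf (traj f x u N)

/-- The horizon-`N` optimal cost `V⁰_N(x)`: the infimum of the cost over all feasible
control sequences of length `N` from `x` whose trajectory ends in `Xf`. -/
noncomputable def Vopt {n m p : ℕ} (f : Vec n → Vec m → Vec n) (h : Vec n → Vec m → Vec p)
    (X : Set (Vec n)) (U : Set (Vec m)) (Y : Set (Vec p)) (Xf : Set (Vec n))
    (l : Vec n → Vec m → ℝ) (Vf : Vec n → ℝ) (N : ℕ) (x : Vec n) : ℝ :=
  sInf {c : ℝ | ∃ u : ℕ → Vec m,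
    FeasSeq f h X U Y x N u ∧ traj f x u N ∈ Xf ∧ c = cost f l Vf x N u}

/-- Assumption 3: for every `x ∈ Xf` there is a feasible `u` with `f x u ∈ Xf` and
`l x u + Vf (f x u) ≤ Vf x`. -/
def Assumption3 {n m p : ℕ} (f : Vec n → Vec m → Vec n) (h : Vec n → Vec m → Vec p)
    (X : Set (Vec n)) (U : Set (Vec m)) (Y : Set (Vec p)) (Xf : Set (Vec n))
    (l : Vec n → Vec m → ℝ) (Vf : Vec n → ℝ) : Prop :=
  ∀ x ∈ Xf, ∃ u, Feas f h X U Y x u ∧ f x u ∈ Xf ∧ l x u + Vf (f x u) ≤ Vf x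

/-- A function `α : [0,∞) → [0,∞)` is of class `K∞` if it is continuous, strictly
increasing, `α 0 = 0` and `α s → ∞` as `s → ∞`. -/
def IsKInf (α : ℝ → ℝ) : Prop :=
  ContinuousOn α (Ici 0) ∧ StrictMonoOn α (Ici 0) ∧ α 0 = 0 ∧
    Tendsto α atTop atTop ∧ ∀ s ∈ Ici (0 : ℝ), 0 ≤ α s

/-
Every stage cost and the terminal cost dominate `α₁ ‖·‖ ≥ 0`, so every admissible cost from `x`
is at least `α₁ ‖x‖`, and on `Xf` the zero-horizon problem has value `Vf`. For the descent, the
tail of an optimal sequence from `x ∉ Xf` is admissible from the successor `x⁺` with horizon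
`N(x) - 1`, which by minimality of `N(x)` is exactly `N(x⁺)`; hence `V(x⁺) ≤ V(x) - l(x, κ x)`.
On `Xf` the descent is the decrease condition of Assumption 3 satisfied by `κ`.
-/

section Trajectories

variable {n m p : ℕ} {f : Vec n → Vec m → Vec n} {h : Vec n → Vec m → Vec p}
  {X : Set (Vec n)} {U : Set (Vec m)} {Y : Set (Vec p)} {Xf : Set (Vec n)}
  {l : Vec n → Vec m → ℝ} {Vf : Vec n → ℝ}

lemma traj_succ_eq_traj_tail (f : Vec n → Vec m → Vec n) (x : Vec n) (u : ℕ → Vec m) :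
    ∀ k, traj f x u (k + 1) = traj f (f x (u 0)) (fun j => u (j + 1)) k
  | 0 => rfl
  | k + 1 => congrArg (f · (u (k + 1))) (traj_succ_eq_traj_tail f x u k)

lemma feasSeq_succ_iff {x : Vec n} {N : ℕ} {u : ℕ → Vec m} :
    FeasSeq f h X U Y x (N + 1) u ↔
      Feas f h X U Y x (u 0) ∧ FeasSeq f h X U Y (f x (u 0)) N (fun j => u (j + 1)) := by
  constructor
  · intro hu
    refine ⟨hu 0 N.succ_pos, fun k hk => ?_⟩
    simpa only [traj_succ_eq_traj_tail] using hu (k + 1) (by omega)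
  · rintro ⟨hu0, hu⟩ (_ | k) hk
    · exact hu0
    · rw [traj_succ_eq_traj_tail]
      exact hu k (by omega)

lemma cost_zero (x : Vec n) (u : ℕ → Vec m) : cost f l Vf x 0 u = Vf x := by
  simp only [cost, Finset.range_zero, Finset.sum_empty, zero_add]
  rfl

lemma cost_succ (x : Vec n) (N : ℕ) (u : ℕ → Vec m) :
    cost f l Vf x (N + 1) u = l x (u 0) + cost f l Vf (f x (u 0)) N (fun j => u (j + 1)) := by
  simp only [cost, Finset.sum_range_succ', traj_succ_eq_traj_tail]
  rw [add_comm _ (l _ _), add_assoc]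
  rfl

lemma zero_mem_horizonSet {x : Vec n} (hx : x ∈ Xf) : 0 ∈ HorizonSet f h X U Y Xf x :=
  ⟨fun _ => 0, fun _ hk => absurd hk (Nat.not_lt_zero _), hx⟩

lemma succ_mem_horizonSet_iff {x : Vec n} {N : ℕ} :
    N + 1 ∈ HorizonSet f h X U Y Xf x ↔
      ∃ u₀, Feas f h X U Y x u₀ ∧ N ∈ HorizonSet f h X U Y Xf (f x u₀) := by
  constructor
  · rintro ⟨u, hu, hend⟩
    rw [feasSeq_succ_iff] at hu
    rw [traj_succ_eq_traj_tail] at hend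
    exact ⟨u 0, hu.1, fun j => u (j + 1), hu.2, hend⟩
  · rintro ⟨u₀, hu₀, v, hv, hend⟩
    refine ⟨fun k => Nat.rec (motive := fun _ => Vec m) u₀ (fun j _ => v j) k,
      feasSeq_succ_iff.2 ⟨hu₀, hv⟩, ?_⟩
    rwa [traj_succ_eq_traj_tail]

lemma nmin_eq_zero {x : Vec n} (hx : x ∈ Xf) : Nmin f h X U Y Xf x = 0 :=
  Nat.eq_zero_of_le_zero (Nat.sInf_le (zero_mem_horizonSet hx))

lemma nmin_apply_eq {x : Vec n} {N : ℕ} {u : ℕ → Vec m}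
    (hN : Nmin f h X U Y Xf x = N + 1) (hu : FeasSeq f h X U Y x (N + 1) u)
    (hend : traj f x u (N + 1) ∈ Xf) : Nmin f h X U Y Xf (f x (u 0)) = N := by
  have hN_mem : N ∈ HorizonSet f h X U Y Xf (f x (u 0)) :=
    ⟨fun j => u (j + 1), (feasSeq_succ_iff.1 hu).2, by rwa [← traj_succ_eq_traj_tail]⟩
  have hsucc : Nmin f h X U Y Xf (f x (u 0)) + 1 ∈ HorizonSet f h X U Y Xf x :=
    succ_mem_horizonSet_iff.2 ⟨u 0, (feasSeq_succ_iff.1 hu).1, Nat.sInf_mem ⟨N, hN_mem⟩⟩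
  have h_le : Nmin f h X U Y Xf (f x (u 0)) ≤ N := Nat.sInf_le hN_mem
  have h_ge : Nmin f h X U Y Xf x ≤ Nmin f h X U Y Xf (f x (u 0)) + 1 := Nat.sInf_le hsucc
  omega

lemma vopt_zero {x : Vec n} (hx : x ∈ Xf) : Vopt f h X U Y Xf l Vf 0 x = Vf x := by
  have hcosts : {c : ℝ | ∃ u : ℕ → Vec m,
      FeasSeq f h X U Y x 0 u ∧ traj f x u 0 ∈ Xf ∧ c = cost f l Vf x 0 u} = {Vf x} := by
    refine Set.eq_singleton_iff_unique_mem.2 ⟨?_, ?_⟩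
    · obtain ⟨u, hu, hend⟩ : 0 ∈ HorizonSet f h X U Y Xf x := zero_mem_horizonSet hx
      exact ⟨u, hu, hend, (cost_zero x u).symm⟩
    · rintro c ⟨u, -, -, rfl⟩
      exact cost_zero x u
  rw [Vopt, hcosts, csInf_singleton]

end Trajectories

section OptimalCost

variable {n m p : ℕ} {f : Vec n → Vec m → Vec n} {h : Vec n → Vec m → Vec p}
  {X : Set (Vec n)} {U : Set (Vec m)} {Y : Set (Vec p)} {Xf : Set (Vec n)}
  {l : Vec n → Vec m → ℝ} {Vf : Vec n → ℝ} {σ : Vec n → ℝ}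
  (hσ : ∀ y, 0 ≤ σ y) (hl : ∀ x ∈ X, ∀ u ∈ U, σ x ≤ l x u) (hVf : ∀ x ∈ Xf, σ x ≤ Vf x)
include hσ hl hVf

lemma le_cost {N : ℕ} {x : Vec n} {u : ℕ → Vec m} (hx : x ∈ X)
    (hu : FeasSeq f h X U Y x N u) (hend : traj f x u N ∈ Xf) : σ x ≤ cost f l Vf x N u := by
  induction N generalizing x u with
  | zero => rw [cost_zero]; exact hVf x hend
  | succ N ih =>
    rw [feasSeq_succ_iff] at hu
    rw [traj_succ_eq_traj_tail] at hend
    rw [cost_succ]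
    linarith [hl x hx _ hu.1.1, hσ (f x (u 0)), ih hu.1.2.1 hu.2 hend]

lemma vopt_le_cost {N : ℕ} {x : Vec n} {u : ℕ → Vec m} (hx : x ∈ X)
    (hu : FeasSeq f h X U Y x N u) (hend : traj f x u N ∈ Xf) :
    Vopt f h X U Y Xf l Vf N x ≤ cost f l Vf x N u := by
  refine csInf_le ⟨0, ?_⟩ ⟨u, hu, hend, rfl⟩
  rintro c ⟨v, hv, hvend, rfl⟩
  exact (hσ x).trans (le_cost hσ hl hVf hx hv hvend)

lemma le_vopt {N : ℕ} {x : Vec n} (hx : x ∈ X) (hN : N ∈ HorizonSet f h X U Y Xf x) :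
    σ x ≤ Vopt f h X U Y Xf l Vf N x := by
  obtain ⟨u, hu, hend⟩ := hN
  refine le_csInf ⟨_, u, hu, hend, rfl⟩ ?_
  rintro c ⟨v, hv, hvend, rfl⟩
  exact le_cost hσ hl hVf hx hv hvend

lemma vopt_nmin_apply_le_cost_sub {x : Vec n} {u : ℕ → Vec m} (hx : x ∈ X) (hxf : x ∉ Xf)
    (hu : FeasSeq f h X U Y x (Nmin f h X U Y Xf x) u)
    (hend : traj f x u (Nmin f h X U Y Xf x) ∈ Xf) :
    Vopt f h X U Y Xf l Vf (Nmin f h X U Y Xf (f x (u 0))) (f x (u 0)) ≤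
      cost f l Vf x (Nmin f h X U Y Xf x) u - σ x := by
  obtain ⟨N, hN⟩ : ∃ N, Nmin f h X U Y Xf x = N + 1 :=
    Nat.exists_eq_succ_of_ne_zero fun h0 => hxf (by rwa [h0] at hend)
  rw [hN] at hu hend ⊢
  rw [nmin_apply_eq hN hu hend, cost_succ]
  rw [feasSeq_succ_iff] at hu
  rw [traj_succ_eq_traj_tail] at hend
  linarith [hl x hx _ hu.1.1, vopt_le_cost hσ hl hVf hu.1.2.1 hu.2 hend]

end OptimalCost

theorem stmt_4_general {n m p : ℕ} (f : Vec n → Vec m → Vec n) (h : Vec n → Vec m → Vec p)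
    (X : Set (Vec n)) (U : Set (Vec m)) (Y : Set (Vec p)) (Xf : Set (Vec n))
    (l : Vec n → Vec m → ℝ) (Vf : Vec n → ℝ) (κ : Vec n → Vec m)
    (hopt : ∀ x ∈ X, ∃ u : ℕ → Vec m,
      FeasSeq f h X U Y x (Nmin f h X U Y Xf x) u ∧
      traj f x u (Nmin f h X U Y Xf x) ∈ Xf ∧
      cost f l Vf x (Nmin f h X U Y Xf x) u
        = Vopt f h X U Y Xf l Vf (Nmin f h X U Y Xf x) x ∧
      (x ∉ Xf → κ x = u 0))
    (hκf : ∀ x ∈ Xf, Feas f h X U Y x (κ x) ∧ f x (κ x) ∈ Xf ∧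
      l x (κ x) + Vf (f x (κ x)) ≤ Vf x)
    (α₁ α₂ : ℝ → ℝ) (hα₁ : IsKInf α₁)
    (hl : ∀ x ∈ X, ∀ u ∈ U, α₁ ‖x‖ ≤ l x u)
    (hVf : ∀ x ∈ Xf, α₁ ‖x‖ ≤ Vf x ∧ Vf x ≤ α₂ ‖x‖) :
    (∀ x ∈ X, α₁ ‖x‖ ≤ Vopt f h X U Y Xf l Vf (Nmin f h X U Y Xf x) x) ∧
    (∀ x ∈ Xf, Vopt f h X U Y Xf l Vf (Nmin f h X U Y Xf x) x ≤ α₂ ‖x‖) ∧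
    (∀ x ∈ X,
      Vopt f h X U Y Xf l Vf (Nmin f h X U Y Xf (f x (κ x))) (f x (κ x)) ≤
        Vopt f h X U Y Xf l Vf (Nmin f h X U Y Xf x) x - α₁ ‖x‖) := by
  have hα₁_nonneg : ∀ y : Vec n, 0 ≤ α₁ ‖y‖ := fun y => hα₁.2.2.2.2 _ (norm_nonneg y)
  have hVf₁ : ∀ x ∈ Xf, α₁ ‖x‖ ≤ Vf x := fun x hx => (hVf x hx).1
  refine ⟨fun x hx => ?_, fun x hx => ?_, fun x hx => ?_⟩
  · obtain ⟨u, hu, hend, -⟩ := hopt x hx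
    exact le_vopt hα₁_nonneg hl hVf₁ hx ⟨u, hu, hend⟩
  · rw [nmin_eq_zero hx, vopt_zero hx]
    exact (hVf x hx).2
  · by_cases hxf : x ∈ Xf
    · obtain ⟨hκ, hnext, hdecrease⟩ := hκf x hxf
      rw [nmin_eq_zero hnext, vopt_zero hnext, nmin_eq_zero hxf, vopt_zero hxf]
      linarith [hl x hx _ hκ.1]
    · obtain ⟨u, hu, hend, hcost, hκ⟩ := hopt x hx
      rw [hκ hxf, ← hcost]
      exact vopt_nmin_apply_le_cost_sub hα₁_nonneg hl hVf₁ hx hxf hu hend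

/-- Proposition 1: under Assumption 3, boundedness of the horizon function
`N(·)` on `X`, existence of optimal sequences (with `κ x` the first element of an optimal
sequence for `x ∉ Xf`, and `κ x` the control provided by Assumption 3 for `x ∈ Xf`), and
class-K∞ bounds `l(x,u) ≥ α₁(|x|)` on `X × U` and `α₁(|x|) ≤ Vf(x) ≤ α₂(|x|)` on `Xf`,
the function `V(x) = V⁰_{N(x)}(x)` satisfies `V(x) ≥ α₁(|x|)` on `X`, `V(x) ≤ α₂(|x|)` on
`Xf`, and `V(f x (κ x)) ≤ V(x) - α₁(|x|)` on `X`. -/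
theorem stmt_4 {n m p : ℕ} (f : Vec n → Vec m → Vec n) (h : Vec n → Vec m → Vec p)
    (X : Set (Vec n)) (U : Set (Vec m)) (Y : Set (Vec p)) (Xf : Set (Vec n))
    (l : Vec n → Vec m → ℝ) (Vf : Vec n → ℝ) (κ : Vec n → Vec m)
    (hXfX : Xf ⊆ X)
    (hA3 : Assumption3 f h X U Y Xf l Vf)
    (hreach : ∀ x ∈ X, (HorizonSet f h X U Y Xf x).Nonempty)
    (M : ℕ) (hM : ∀ x ∈ X, Nmin f h X U Y Xf x ≤ M)
    (hopt : ∀ x ∈ X, ∃ u : ℕ → Vec m,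
      FeasSeq f h X U Y x (Nmin f h X U Y Xf x) u ∧
      traj f x u (Nmin f h X U Y Xf x) ∈ Xf ∧
      cost f l Vf x (Nmin f h X U Y Xf x) u
        = Vopt f h X U Y Xf l Vf (Nmin f h X U Y Xf x) x ∧
      (x ∉ Xf → κ x = u 0))
    (hκf : ∀ x ∈ Xf, Feas f h X U Y x (κ x) ∧ f x (κ x) ∈ Xf ∧
      l x (κ x) + Vf (f x (κ x)) ≤ Vf x)
    (α₁ α₂ : ℝ → ℝ) (hα₁ : IsKInf α₁) (hα₂ : IsKInf α₂)
    (hl : ∀ x ∈ X, ∀ u ∈ U, α₁ ‖x‖ ≤ l x u)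
    (hVf : ∀ x ∈ Xf, α₁ ‖x‖ ≤ Vf x ∧ Vf x ≤ α₂ ‖x‖) :
    (∀ x ∈ X, α₁ ‖x‖ ≤ Vopt f h X U Y Xf l Vf (Nmin f h X U Y Xf x) x) ∧
    (∀ x ∈ Xf, Vopt f h X U Y Xf l Vf (Nmin f h X U Y Xf x) x ≤ α₂ ‖x‖) ∧
    (∀ x ∈ X,
      Vopt f h X U Y Xf l Vf (Nmin f h X U Y Xf (f x (κ x))) (f x (κ x)) ≤
        Vopt f h X U Y Xf l Vf (Nmin f h X U Y Xf x) x - α₁ ‖x‖) :=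
  stmt_4_general f h X U Y Xf l Vf κ hopt hκf α₁ α₂ hα₁ hl hVf
end

section
/- Assume f, h, l and V_f are continuous, l ≥ 0, 𝕏 is compact, 𝕌 is compact, 𝕏_f is closed, contains an open neighborhood of the origin, and is controlled invariant. Fix N ∈ ℕ. If there exists a class-K∞ function α such that V⁰_N(x) ≤ α(|x|) for all x ∈ 𝕏_f, then there exists a class-K∞ function β_N such that V⁰_N(x) ≤ β_N(|x|) for all x ∈ X_N. -/
open Set Filter Topology

lemma traj_cons {n m : ℕ} (f : Vec n → Vec m → Vec n) (x : Vec n)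
    (u₀ : Vec m) (u' : ℕ → Vec m) (k : ℕ) :
    traj f x (fun j => Nat.casesOn j u₀ u') (k + 1) = traj f (f x u₀) u' k := by
  induction k with
  | zero => rfl
  | succ k ih =>
    show f (traj f x (fun j => Nat.casesOn j u₀ u') (k + 1)) _ = _
    rw [ih]; rfl

lemma exists_feasSeq {n m p : ℕ} (f : Vec n → Vec m → Vec n) (h : Vec n → Vec m → Vec p)
    (X : Set (Vec n)) (U : Set (Vec m)) (Y : Set (Vec p)) (Xf : Set (Vec n)) :
    ∀ N x, x ∈ XN f h X U Y Xf N →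
      ∃ u : ℕ → Vec m, FeasSeq f h X U Y x N u ∧ traj f x u N ∈ Xf := by
  intro N
  induction N with
  | zero =>
    intro x hx
    exact ⟨fun _ => 0, fun k hk => absurd hk (by omega), hx⟩
  | succ N ih =>
    intro x hx
    simp only [XN, Set.mem_setOf_eq] at hx
    obtain ⟨hxX, u₀, hfeas, hnext⟩ := hx
    obtain ⟨u', hu', hend⟩ := ih _ hnext
    refine ⟨fun j => Nat.casesOn j u₀ u', ?_, ?_⟩
    · intro k hk
      cases k with
      | zero => exact hfeas
      | succ k =>
        rw [traj_cons]
        exact hu' k (by omega)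
    · rw [traj_cons]; exact hend

lemma traj_mem_X {n m p : ℕ} {f : Vec n → Vec m → Vec n} {h : Vec n → Vec m → Vec p}
    {X : Set (Vec n)} {U : Set (Vec m)} {Y : Set (Vec p)}
    {x : Vec n} {N : ℕ} {u : ℕ → Vec m} (hx : x ∈ X)
    (hu : FeasSeq f h X U Y x N u) : ∀ k ≤ N, traj f x u k ∈ X := by
  intro k hk
  cases k with
  | zero => exact hx
  | succ k => exact (hu k (by omega)).2.1

/-- Proposition 2: with `f, h, l, Vf` continuous, `l ≥ 0`, `X` and `U`
compact, `Xf` closed, containing an open neighborhood of the origin and controlled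
invariant: if there is a class-K∞ function `α` with `V⁰_N(x) ≤ α(|x|)` on `Xf`, then
there is a class-K∞ function `β_N` with `V⁰_N(x) ≤ β_N(|x|)` on `X_N`. -/
theorem stmt_5 {n m p : ℕ} (f : Vec n → Vec m → Vec n) (h : Vec n → Vec m → Vec p)
    (X : Set (Vec n)) (U : Set (Vec m)) (Y : Set (Vec p)) (Xf : Set (Vec n))
    (l : Vec n → Vec m → ℝ) (Vf : Vec n → ℝ)
    (hXfX : Xf ⊆ X)
    (hf : Continuous fun q : Vec n × Vec m => f q.1 q.2)
    (hh : Continuous fun q : Vec n × Vec m => h q.1 q.2)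
    (hl : Continuous fun q : Vec n × Vec m => l q.1 q.2)
    (hVf : Continuous Vf)
    (hlnn : ∀ x u, 0 ≤ l x u)
    (hX : IsCompact X) (hU : IsCompact U) (hXfclosed : IsClosed Xf)
    (hXfnbhd : Xf ∈ 𝓝 (0 : Vec n))
    (hinv : CtrlInv f h X U Y Xf)
    (N : ℕ) (α : ℝ → ℝ) (hα : IsKInf α)
    (hbound : ∀ x ∈ Xf, Vopt f h X U Y Xf l Vf N x ≤ α ‖x‖) :
    ∃ βN : ℝ → ℝ, IsKInf βN ∧
      ∀ x ∈ XN f h X U Y Xf N, Vopt f h X U Y Xf l Vf N x ≤ βN ‖x‖ := by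
  -- Xf is compact, nonempty
  have hXfcpt : IsCompact Xf := hX.of_isClosed_subset hXfclosed hXfX
  -- bound for Vf on Xf
  obtain ⟨B, hB⟩ := hXfcpt.exists_bound_of_continuousOn hVf.continuousOn
  -- bound for l on X × U
  obtain ⟨L, hL⟩ := (hX.prod hU).exists_bound_of_continuousOn hl.continuousOn
  -- ball inside Xf
  obtain ⟨ε, hε, hball⟩ := Metric.mem_nhds_iff.mp hXfnbhd
  -- uniform bound on Vopt over X_N
  have key : ∀ x ∈ XN f h X U Y Xf N, Vopt f h X U Y Xf l Vf N x ≤ N * L + B := by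
    intro x hx
    have hxX : x ∈ X := by
      cases N with
      | zero => exact hXfX hx
      | succ N =>
        simp only [XN, Set.mem_setOf_eq] at hx
        exact hx.1
    obtain ⟨u, hu, hend⟩ := exists_feasSeq f h X U Y Xf N x hx
    have hbdd : BddBelow {c : ℝ | ∃ u : ℕ → Vec m,
        FeasSeq f h X U Y x N u ∧ traj f x u N ∈ Xf ∧ c = cost f l Vf x N u} := by
      refine ⟨-B, ?_⟩
      rintro c ⟨v, hv, hvend, rfl⟩
      have h1 : (0:ℝ) ≤ ∑ k ∈ Finset.range N, l (traj f x v k) (v k) :=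
        Finset.sum_nonneg fun k _ => hlnn _ _
      have h2 : -B ≤ Vf (traj f x v N) := by
        have := hB _ hvend
        rw [Real.norm_eq_abs, abs_le] at this
        exact this.1
      simp only [cost]; linarith
    have hmem : cost f l Vf x N u ∈ {c : ℝ | ∃ u : ℕ → Vec m,
        FeasSeq f h X U Y x N u ∧ traj f x u N ∈ Xf ∧ c = cost f l Vf x N u} :=
      ⟨u, hu, hend, rfl⟩
    refine le_trans (csInf_le hbdd hmem) ?_
    have h1 : ∑ k ∈ Finset.range N, l (traj f x u k) (u k) ≤ N * L := by
      have : ∀ k ∈ Finset.range N, l (traj f x u k) (u k) ≤ L := by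
        intro k hk
        rw [Finset.mem_range] at hk
        have hmemXU : (traj f x u k, u k) ∈ X ×ˢ U :=
          ⟨traj_mem_X hxX hu k hk.le, (hu k hk).1⟩
        have := hL _ hmemXU
        rw [Real.norm_eq_abs, abs_le] at this
        exact this.2
      calc ∑ k ∈ Finset.range N, l (traj f x u k) (u k)
          ≤ ∑ _k ∈ Finset.range N, L := Finset.sum_le_sum this
        _ = N * L := by simp [mul_comm]
    have h2 : Vf (traj f x u N) ≤ B := by
      have := hB _ hend
      rw [Real.norm_eq_abs, abs_le] at this
      exact this.2
    simp only [cost]; linarith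
  -- define βN
  set M : ℝ := max (N * L + B) 0 with hM
  have hMnn : 0 ≤ M := le_max_right _ _
  set c : ℝ := M / ε with hc
  have hcnn : 0 ≤ c := div_nonneg hMnn hε.le
  refine ⟨fun s => α s + c * s, ⟨?_, ?_, ?_, ?_, ?_⟩, ?_⟩
  · exact hα.1.add ((continuous_const.mul continuous_id).continuousOn)
  · intro a ha b hb hab
    dsimp only
    have h1 : α a < α b := hα.2.1 ha hb hab
    have h2 : c * a ≤ c * b := mul_le_mul_of_nonneg_left hab.le hcnn
    linarith
  · show α 0 + c * 0 = 0
    rw [hα.2.2.1]; ring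
  · refine tendsto_atTop_mono' atTop ?_ hα.2.2.2.1
    filter_upwards [eventually_ge_atTop (0:ℝ)] with s hs
    nlinarith
  · intro s hs
    exact add_nonneg (hα.2.2.2.2 s hs) (mul_nonneg hcnn hs)
  · intro x hx
    rcases lt_or_ge ‖x‖ ε with hlt | hge
    · have hxXf : x ∈ Xf := by
        apply hball
        rw [Metric.mem_ball, dist_zero_right]
        exact hlt
      have h1 := hbound x hxXf
      have h2 : 0 ≤ c * ‖x‖ := mul_nonneg hcnn (norm_nonneg x)
      dsimp only
      linarith
    · have h1 := key x hx
      have h2 : N * L + B ≤ M := le_max_left _ _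
      have h3 : M = c * ε := by
        rw [hc, div_mul_cancel₀ _ hε.ne']
      have h4 : c * ε ≤ c * ‖x‖ := mul_le_mul_of_nonneg_left hge hcnn
      have h5 : 0 ≤ α ‖x‖ := hα.2.2.2.2 _ (norm_nonneg x)
      dsimp only
      linarith
end
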